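/- Define f : ℕ → ℕ by f(0) = 2, f(1) = 4, and f(m) = 3f(m−1) + 2f(m−2) for all m ≥ 2. Then for every m ≥ 1, f(m) equals the cardinality of the NP-LOCO code NPC(m). -/

import Mathlib

/-- The NP-LOCO code: words of length `m` over the alphabet `{0,1,2,3}`
(position `m-1` most significant) containing no contiguous subword `u 3 v` with
`u, v ∈ {0,1}` and no contiguous subword `u 0 v` with `u, v ∈ {2,3}`. -/
def NPC (m : ℕ) : Set (Fin m → Fin 4) :=
  {c | ∀ i : ℕ, ∀ h : i + 2 < m,
      ¬((c ⟨i + 2, h⟩ ∈ ({0, 1} : Set (Fin 4)) ∧ c ⟨i + 1, by omega⟩ = 3 ∧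
            c ⟨i, by omega⟩ ∈ ({0, 1} : Set (Fin 4))) ∨
        (c ⟨i + 2, h⟩ ∈ ({2, 3} : Set (Fin 4)) ∧ c ⟨i + 1, by omega⟩ = 0 ∧
            c ⟨i, by omega⟩ ∈ ({2, 3} : Set (Fin 4))))}

/-!
Letters `0, 1` are low and `2, 3` high; a forbidden subword `a b c` has `a, c` of equal level and
`b` the extreme letter of the other level. Build codewords by prepending letters, and call a
codeword `w` closed if `w 0` is the extreme letter of the level opposite to `w 1`. A closed word
admits 2 letters in front of it, an open one all 4; and exactly one letter `x` makes `x w` closed,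
which is admissible precisely when `w` is open. With `N m` codewords of length `m` and `B m` closed
ones of length `m + 2`, this gives `N (m + 3) = 4 N (m + 2) - 2 B m` and
`B (m + 1) = N (m + 2) - B m`, and eliminating `B` yields `N (m + 3) = 3 N (m + 2) + 2 N (m + 1)`.
-/

open Finset

section AvoidsTriples

variable {α : Type*} (F : α → α → α → Prop)

def AvoidsTriples {m : ℕ} (c : Fin m → α) : Prop :=
  ∀ i : ℕ, ∀ h : i + 2 < m, ¬F (c ⟨i, by omega⟩) (c ⟨i + 1, by omega⟩) (c ⟨i + 2, h⟩)

variable {F}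

instance [∀ a b c, Decidable (F a b c)] {m : ℕ} (c : Fin m → α) : Decidable (AvoidsTriples F c) :=
  decidable_of_iff (∀ i : Fin m, ∀ h : i.val + 2 < m, ¬F (c i) (c ⟨i + 1, by omega⟩) (c ⟨i + 2, h⟩))
    ⟨fun H i h => H ⟨i, by omega⟩ h, fun H i h => H i h⟩

theorem avoidsTriples_of_le_two {m : ℕ} (hm : m ≤ 2) (c : Fin m → α) : AvoidsTriples F c :=
  fun _ h => absurd h (by omega)

theorem avoidsTriples_cons_iff {m : ℕ} (x : α) (w : Fin (m + 2) → α) :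
    AvoidsTriples F (Fin.cons x w : Fin (m + 3) → α) ↔ ¬F x (w 0) (w 1) ∧ AvoidsTriples F w := by
  constructor
  · intro h
    have h₀ := h 0 (by omega)
    exact ⟨h₀, fun i hi => h (i + 1) (by omega)⟩
  · rintro ⟨h₀, h⟩ (_ | i) hi
    · exact h₀
    · exact h i (by omega)

theorem card_avoidsTriples_cons [Fintype α] [∀ a b c, Decidable (F a b c)] {m : ℕ}
    (Q : (Fin (m + 3) → α) → Prop) [DecidablePred Q] :
    #{c | AvoidsTriples F c ∧ Q c} =
      ∑ w with AvoidsTriples F w, #{x | ¬F x (w 0) (w 1) ∧ Q (Fin.cons x w)} := by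
  rw [← card_sigma, eq_comm]
  refine card_nbij' (fun p : (_ : Fin (m + 2) → α) × α => (Fin.cons p.2 p.1 : Fin (m + 3) → α))
    (fun c => ⟨Fin.tail c, c 0⟩) ?_ ?_ ?_ ?_
  · rintro ⟨w, x⟩ h
    simp only [coe_sigma, Set.mem_sigma_iff, coe_filter, mem_univ, true_and, Set.mem_ofPred_eq] at h ⊢
    exact ⟨(avoidsTriples_cons_iff x w).2 ⟨h.2.1, h.1⟩, h.2.2⟩
  · intro c h
    simp only [coe_sigma, Set.mem_sigma_iff, coe_filter, mem_univ, true_and, Set.mem_ofPred_eq] at h ⊢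
    obtain ⟨hc, hQ⟩ := h
    rw [← Fin.cons_self_tail c, avoidsTriples_cons_iff] at hc
    exact ⟨hc.2, hc.1, by rwa [Fin.cons_self_tail]⟩
  · rintro ⟨w, x⟩ _
    simp
  · intro c _
    exact Fin.cons_self_tail c

end AvoidsTriples

namespace NPC

/-- The middle letter that a forbidden subword with outer letter `a` must have. -/
def spike (a : Fin 4) : Fin 4 := if a < 2 then 3 else 0

def IsForbidden (a b c : Fin 4) : Prop := b = spike a ∧ b = spike c

instance (a b c : Fin 4) : Decidable (IsForbidden a b c) := inferInstanceAs (Decidable (_ ∧ _))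

theorem mem_iff {m : ℕ} (c : Fin m → Fin 4) : c ∈ NPC m ↔ AvoidsTriples IsForbidden c := by
  have key : ∀ a b c : Fin 4, ((c ∈ ({0, 1} : Set (Fin 4)) ∧ b = 3 ∧ a ∈ ({0, 1} : Set (Fin 4))) ∨
      (c ∈ ({2, 3} : Set (Fin 4)) ∧ b = 0 ∧ a ∈ ({2, 3} : Set (Fin 4)))) ↔ IsForbidden a b c := by
    simp only [Set.mem_insert_iff, Set.mem_singleton_iff]
    decide
  simp only [NPC, AvoidsTriples, Set.mem_ofPred_eq, key]

theorem card_not_isForbidden (a b : Fin 4) :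
    #{x | ¬IsForbidden x a b} = if a = spike b then 2 else 4 := by
  revert a b; decide

theorem card_not_isForbidden_and_eq_spike (a b : Fin 4) :
    #{x | ¬IsForbidden x a b ∧ x = spike a} = if a = spike b then 0 else 1 := by
  revert a b; decide

def words (m : ℕ) : Finset (Fin m → Fin 4) := {c | AvoidsTriples IsForbidden c}

def closedWords (m : ℕ) : Finset (Fin (m + 2) → Fin 4) :=
  {w ∈ words (m + 2) | w 0 = spike (w 1)}

theorem ncard_eq_card_words (m : ℕ) : (NPC m).ncard = #(words m) := by
  rw [← Set.ncard_coe_finset]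
  congr 1
  ext c
  simp [words, mem_iff]

theorem card_words_of_le_two {m : ℕ} (hm : m ≤ 2) : #(words m) = 4 ^ m := by
  simp [words, avoidsTriples_of_le_two hm]

theorem card_closedWords_zero : #(closedWords 0) = 4 := by
  decide

theorem card_words_add_three (m : ℕ) :
    #(words (m + 3)) + 2 * #(closedWords m) = 4 * #(words (m + 2)) := by
  have h := card_avoidsTriples_cons (F := IsForbidden) (m := m) (fun _ => True)
  simp only [and_true] at h
  calc #(words (m + 3)) + 2 * #(closedWords m)
      = ∑ w ∈ words (m + 2), ((if w 0 = spike (w 1) then 2 else 4) +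
          if w 0 = spike (w 1) then 2 else 0) := by
        rw [words, h, ← words, closedWords, card_filter, mul_sum, ← sum_add_distrib]
        refine sum_congr rfl fun w _ => ?_
        rw [← card_not_isForbidden]
        split_ifs <;> simp
    _ = 4 * #(words (m + 2)) := by
        rw [card_eq_sum_ones, mul_sum]
        exact sum_congr rfl fun w _ => by split_ifs <;> rfl

theorem card_closedWords_succ_add (m : ℕ) :
    #(closedWords (m + 1)) + #(closedWords m) = #(words (m + 2)) := by
  calc #(closedWords (m + 1)) + #(closedWords m)
      = ∑ w ∈ words (m + 2), ((if w 0 = spike (w 1) then 0 else 1) +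
          if w 0 = spike (w 1) then 1 else 0) := by
        rw [closedWords, words, filter_filter, card_avoidsTriples_cons, ← words, closedWords,
          card_filter, ← sum_add_distrib]
        refine sum_congr rfl fun w _ => ?_
        rw [← card_not_isForbidden_and_eq_spike]
        simp
    _ = #(words (m + 2)) := by
        rw [card_eq_sum_ones]
        exact sum_congr rfl fun w _ => by split_ifs <;> rfl

theorem card_words_add_three_eq (m : ℕ) :
    #(words (m + 3)) = 3 * #(words (m + 2)) + 2 * #(words (m + 1)) := by
  rcases m with _ | m
  · show #(words 3) = 3 * #(words 2) + 2 * #(words 1)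
    have h : #(words 3) + 2 * #(closedWords 0) = 4 * #(words 2) := card_words_add_three 0
    rw [card_closedWords_zero, card_words_of_le_two le_rfl] at h
    rw [card_words_of_le_two le_rfl, card_words_of_le_two (m := 1) (by norm_num)]
    omega
  · show #(words (m + 4)) = 3 * #(words (m + 3)) + 2 * #(words (m + 2))
    have h₁ : #(words (m + 4)) + 2 * #(closedWords (m + 1)) = 4 * #(words (m + 3)) :=
      card_words_add_three (m + 1)
    have h₂ := card_words_add_three m
    have h₃ := card_closedWords_succ_add m
    omega

end NPC

theorem stmt17 (f : ℕ → ℕ) (hf0 : f 0 = 2) (hf1 : f 1 = 4)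
    (hrec : ∀ m : ℕ, 2 ≤ m → f m = 3 * f (m - 1) + 2 * f (m - 2)) :
    ∀ m : ℕ, 1 ≤ m → (NPC m).ncard = f m := by
  have hf2 : f 2 = 16 := by rw [hrec 2 le_rfl]; simp [hf0, hf1]
  have key : ∀ k, #(NPC.words (k + 1)) = f (k + 1) ∧ #(NPC.words (k + 2)) = f (k + 2) := by
    intro k
    induction k with
    | zero => simp [NPC.card_words_of_le_two, hf1, hf2]
    | succ k ih =>
      refine ⟨ih.2, ?_⟩
      rw [NPC.card_words_add_three_eq, ih.1, ih.2, hrec (k + 3) (by omega)]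
      rfl
  intro m hm
  obtain ⟨k, rfl⟩ := Nat.exists_eq_add_of_le' hm
  rw [NPC.ncard_eq_card_words, (key k).1]
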